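/- arXiv:1601.08042 — 2 statements merged into one kernel-verified Lean document; each statement's English description precedes it below -/
import Mathlib

section
/- Let f be an entire function such that |f(z)| ≤ C e^{|z|} for all z ∈ ℂ and |f(x)| ≤ C for all real x. Then |f(z)| ≤ C' e^{|Im z|} for all z ∈ ℂ, for some constant C'. -/
/-!
The function `g z = exp (i z) f z` has modulus `|f z| e^{-Im z}`, so it is bounded by `C` on the
real axis and, by the growth hypothesis, on the positive imaginary axis, while it grows at most
like `e^{2|z|}`. Phragmén–Lindelöf in the first and second quadrants bounds it by `C` on the closed
upper half-plane, i.e. `|f z| ≤ C e^{Im z}` there; applying this to `z ↦ f (-z)` handles the lower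
half-plane.
-/

open Complex Filter Bornology Asymptotics

namespace PhragmenLindelof

variable {E : Type*} [NormedAddCommGroup E] [NormedSpace ℂ E]

theorem closed_upper_half_plane {g : ℂ → E} {C : ℝ} (hd : Differentiable ℂ g)
    (hexp : ∃ B, g =O[cobounded ℂ] fun z => Real.exp (B * ‖z‖))
    (hre : ∀ x : ℝ, ‖g x‖ ≤ C) (him : ∀ y : ℝ, 0 ≤ y → ‖g (y * I)‖ ≤ C)
    {z : ℂ} (hz : 0 ≤ z.im) : ‖g z‖ ≤ C := by
  obtain ⟨B, hO⟩ := hexp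
  have hO' : ∀ s : Set ℂ, ∃ c < (2 : ℝ), ∃ B,
      g =O[cobounded ℂ ⊓ 𝓟 s] fun z => Real.exp (B * ‖z‖ ^ c) := fun s =>
    ⟨1, one_lt_two, B, by simpa only [Real.rpow_one] using hO.mono inf_le_left⟩
  rcases le_total 0 z.re with hz_re | hz_re
  · exact quadrant_I hd.diffContOnCl (hO' _) (fun x _ => hre x) him hz_re hz
  · exact quadrant_II hd.diffContOnCl (hO' _) (fun x _ => hre x) him hz_re hz

end PhragmenLindelof

theorem Complex.norm_exp_I_mul (z : ℂ) : ‖exp (I * z)‖ = Real.exp (-z.im) := by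
  simp [Complex.norm_exp]

theorem norm_le_mul_exp_im_of_im_nonneg {f : ℂ → ℂ} {C : ℝ} (hf : Differentiable ℂ f)
    (hgrowth : ∀ z : ℂ, ‖f z‖ ≤ C * Real.exp ‖z‖) (hreal : ∀ x : ℝ, ‖f x‖ ≤ C)
    {z : ℂ} (hz : 0 ≤ z.im) : ‖f z‖ ≤ C * Real.exp z.im := by
  set g : ℂ → ℂ := fun w => exp (I * w) * f w
  have hg : ∀ w, ‖g w‖ = Real.exp (-w.im) * ‖f w‖ := fun w => by
    simp only [g, norm_mul, norm_exp_I_mul]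
  have hexp : g =O[cobounded ℂ] fun w => Real.exp (2 * ‖w‖) := by
    refine IsBigO.of_bound C (Eventually.of_forall fun w => ?_)
    rw [hg, Real.norm_eq_abs, Real.abs_exp]
    calc Real.exp (-w.im) * ‖f w‖ ≤ Real.exp ‖w‖ * (C * Real.exp ‖w‖) := by
          gcongr
          · exact neg_le_abs _ |>.trans (abs_im_le_norm w)
          · exact hgrowth w
      _ = C * Real.exp (2 * ‖w‖) := by rw [two_mul, Real.exp_add]; ring
  have hre : ∀ x : ℝ, ‖g x‖ ≤ C := fun x => by simpa [hg] using hreal x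
  have him : ∀ y : ℝ, 0 ≤ y → ‖g (y * I)‖ ≤ C := fun y hy => by
    have h := hgrowth (y * I)
    rw [norm_mul, norm_I, mul_one, norm_real, Real.norm_of_nonneg hy] at h
    calc ‖g (y * I)‖ = Real.exp (-y) * ‖f (y * I)‖ := by simp [hg]
      _ ≤ Real.exp (-y) * (C * Real.exp y) := by gcongr
      _ = C := by rw [mul_left_comm, ← Real.exp_add, neg_add_cancel, Real.exp_zero, mul_one]
  have key := PhragmenLindelof.closed_upper_half_plane (by fun_prop) ⟨2, hexp⟩ hre him hz
  rwa [hg, Real.exp_neg, inv_mul_le_iff₀ (Real.exp_pos _), mul_comm] at key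

theorem stmt_7 (f : ℂ → ℂ) (hf : Differentiable ℂ f) (C : ℝ)
    (hgrowth : ∀ z : ℂ, ‖f z‖ ≤ C * Real.exp ‖z‖)
    (hreal : ∀ x : ℝ, ‖f x‖ ≤ C) :
    ∃ C' : ℝ, ∀ z : ℂ, ‖f z‖ ≤ C' * Real.exp |z.im| := by
  refine ⟨C, fun z => ?_⟩
  rcases le_or_gt 0 z.im with hz | hz
  · rw [abs_of_nonneg hz]
    exact norm_le_mul_exp_im_of_im_nonneg hf hgrowth hreal hz
  · have h := norm_le_mul_exp_im_of_im_nonneg (f := fun w => f (-w)) (hf.comp differentiable_neg)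
      (fun w => by simpa using hgrowth (-w)) (fun x => by simpa using hreal (-x))
      (z := -z) (by simpa using hz.le)
    simpa [abs_of_neg hz] using h
end

section
/- Let M be a finite nonnegative Borel measure on ℝ with support in [-1,1] and M({1}) > 0. Then the indicator function u = 1_{{1}} (which equals 1 at μ=1 and 0 elsewhere) lies in L²(M), and u cannot be approximated in L²(M) by functions v for which the moment sequence v_n = ∫ v(μ)μ^n dM(μ) is square-summable. -/
/-!
On `[-1, 1]` the functions `x ^ n * (1 + x)` are bounded by `2` and converge pointwise to
`2 • 1_{1}`: the factor `1 + x` kills the oscillation `(-1) ^ n` at `x = -1`. By dominated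
convergence the sums `v_n + v_{n+1}` of consecutive moments therefore tend to `2 M({1}) v(1)`;
square-summability forces them to tend to `0`, so `v(1) = 0`, and the atom at `1` alone
contributes `M({1}) |1 - v(1)|² = M({1})` to `‖u - v‖²`.
-/

open MeasureTheory Set Filter Topology

lemma tendsto_pow_mul_one_add_of_mem_Icc {x : ℝ} (hx : x ∈ Icc (-1 : ℝ) 1) :
    Tendsto (fun n : ℕ => (x : ℂ) ^ n * (1 + x)) atTop
      (𝓝 (Set.indicator {1} (fun _ => (2 : ℂ)) x)) := by
  rcases eq_or_ne x 1 with rfl | h1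
  · norm_num
  rcases eq_or_ne x (-1) with rfl | hm1
  · norm_num
  have hlt : ‖(x : ℂ)‖ < 1 := by
    rw [Complex.norm_real, Real.norm_eq_abs, abs_lt]
    exact ⟨lt_of_le_of_ne hx.1 (Ne.symm hm1), lt_of_le_of_ne hx.2 h1⟩
  simpa [h1] using (tendsto_pow_atTop_nhds_zero_of_norm_lt_one hlt).mul_const (1 + (x : ℂ))

section Moments

variable {M : Measure ℝ} {v : ℝ → ℂ}

lemma norm_ofReal_pow_le_one_of_mem_Icc {x : ℝ} (hx : x ∈ Icc (-1 : ℝ) 1) (n : ℕ) :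
    ‖(x : ℂ) ^ n‖ ≤ 1 := by
  rw [norm_pow, Complex.norm_real, Real.norm_eq_abs]
  exact pow_le_one₀ (abs_nonneg x) (abs_le.mpr hx)

lemma integrable_mul_ofReal_pow (hv : Integrable v M) (hM : ∀ᵐ x ∂M, x ∈ Icc (-1 : ℝ) 1)
    (n : ℕ) : Integrable (fun x => v x * (x : ℂ) ^ n) M :=
  hv.mul_bdd (Complex.continuous_ofReal.pow n).aestronglyMeasurable
    (hM.mono fun _ hx => norm_ofReal_pow_le_one_of_mem_Icc hx n)

lemma tendsto_moment_add_moment_succ (hv : Integrable v M)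
    (hM : ∀ᵐ x ∂M, x ∈ Icc (-1 : ℝ) 1) :
    Tendsto (fun n : ℕ => ∫ x, v x * (x : ℂ) ^ n ∂M + ∫ x, v x * (x : ℂ) ^ (n + 1) ∂M) atTop
      (𝓝 (M.real {1} • (v 1 * 2))) := by
  have hsum (n : ℕ) : ∫ x, v x * (x : ℂ) ^ n ∂M + ∫ x, v x * (x : ℂ) ^ (n + 1) ∂M
      = ∫ x, v x * ((x : ℂ) ^ n * (1 + x)) ∂M := by
    rw [← integral_add (integrable_mul_ofReal_pow hv hM n) (integrable_mul_ofReal_pow hv hM _)]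
    congr 1 with x
    ring
  have hlim : ∫ x, v x * Set.indicator {1} (fun _ => (2 : ℂ)) x ∂M = M.real {1} • (v 1 * 2) := by
    simp_rw [← indicator_mul_right]
    rw [integral_indicator (measurableSet_singleton 1), integral_singleton]
  simp_rw [hsum, ← hlim]
  refine tendsto_integral_of_dominated_convergence (fun x => 2 * ‖v x‖) (fun n => ?_)
    (hv.norm.const_mul 2) (fun n => ?_) ?_
  · exact hv.aestronglyMeasurable.mul (by fun_prop)
  · filter_upwards [hM] with x hx
    have h1x : ‖1 + (x : ℂ)‖ ≤ 2 := by
      rw [← Complex.ofReal_one, ← Complex.ofReal_add, Complex.norm_real, Real.norm_eq_abs,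
        abs_le]
      constructor <;> linarith [hx.1, hx.2]
    rw [norm_mul, norm_mul, mul_comm 2]
    gcongr
    calc ‖(x : ℂ) ^ n‖ * ‖1 + (x : ℂ)‖ ≤ 1 * 2 := by
          gcongr
          exact norm_ofReal_pow_le_one_of_mem_Icc hx n
      _ = 2 := one_mul 2
  · filter_upwards [hM] with x hx
    exact (tendsto_pow_mul_one_add_of_mem_Icc hx).const_mul (v x)

lemma apply_one_eq_zero_of_tendsto_moments (hv : Integrable v M)
    (hM : ∀ᵐ x ∂M, x ∈ Icc (-1 : ℝ) 1) (h1 : M {1} ≠ 0) (hM1 : M {1} ≠ ⊤)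
    (hmom : Tendsto (fun n : ℕ => ∫ x, v x * (x : ℂ) ^ n ∂M) atTop (𝓝 0)) :
    v 1 = 0 := by
  have h0 := hmom.add (hmom.comp (tendsto_add_atTop_nat 1))
  rw [add_zero] at h0
  have h := tendsto_nhds_unique (tendsto_moment_add_moment_succ hv hM) h0
  have hpos : M.real {1} ≠ 0 := ENNReal.toReal_ne_zero.mpr ⟨h1, hM1⟩
  simpa [hpos] using h

end Moments

lemma measureReal_singleton_mul_le_integral {α : Type*} [MeasurableSpace α]
    [MeasurableSingletonClass α] {μ : Measure α} {f : α → ℝ} (hf : Integrable f μ)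
    (hf0 : 0 ≤ f) (a : α) : μ.real {a} * f a ≤ ∫ x, f x ∂μ := by
  rw [← smul_eq_mul, ← integral_singleton]
  exact setIntegral_le_integral hf (Eventually.of_forall hf0)

theorem stmt_12 (M : Measure ℝ) [IsFiniteMeasure M]
    (hsupp : M (Icc (-1 : ℝ) 1)ᶜ = 0)
    (h1 : 0 < M {(1 : ℝ)})
    (u : ℝ → ℂ) (hu : u = Set.indicator {(1 : ℝ)} (fun _ => (1 : ℂ))) :
    MemLp u 2 M ∧
    ∀ v : ℝ → ℂ, MemLp v 2 M →
      Summable (fun n : ℕ => ‖∫ μ, v μ * (μ : ℂ) ^ n ∂M‖ ^ 2) →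
      (M {(1 : ℝ)}).toReal ≤ ∫ μ, ‖u μ - v μ‖ ^ 2 ∂M := by
  have hu2 : MemLp u 2 M :=
    hu ▸ memLp_indicator_const 2 (measurableSet_singleton 1) 1 (Or.inr (measure_ne_top M _))
  refine ⟨hu2, fun v hv hsum => ?_⟩
  have hmom : Tendsto (fun n : ℕ => ∫ x, v x * (x : ℂ) ^ n ∂M) atTop (𝓝 0) := by
    exact tendsto_zero_iff_norm_tendsto_zero.mpr (by simpa using hsum.tendsto_atTop_zero.sqrt)
  have hv1 : v 1 = 0 := apply_one_eq_zero_of_tendsto_moments (hv.integrable one_le_two)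
    (mem_ae_iff.mpr hsupp) h1.ne' (measure_ne_top M _) hmom
  calc (M {(1 : ℝ)}).toReal = M.real {1} * ‖u 1 - v 1‖ ^ 2 := by simp [hu, hv1, measureReal_def]
    _ ≤ ∫ μ, ‖u μ - v μ‖ ^ 2 ∂M :=
      measureReal_singleton_mul_le_integral ((hu2.sub hv).integrable_norm_pow two_ne_zero)
        (fun _ => by positivity) 1
end
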